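/- Let C be a balanced dagger category (every bimorphism is an isomorphism) that admits polar decomposition, and let D : J ⥤ C be a diagram with a limit cone (L, (l_A)) such that l_A† ∘ l_A commutes with l_B† ∘ l_B for all A, B in some weakly initial class Ω of objects of J. Then there exists a diagram E : J ⥤ C naturally isomorphic to D such that (E, Ω) has a dagger limit. -/

import Mathlib

open CategoryTheory

universe v u v₁ u₁ v₂ u₂

class DaggerCategory (C : Type u) [Category.{v} C] where
  dag : ∀ {A B : C}, (A ⟶ B) → (B ⟶ A)
  dag_id : ∀ (A : C), dag (𝟙 A) = 𝟙 A
  dag_comp : ∀ {A B X : C} (f : A ⟶ B) (g : B ⟶ X), dag (f ≫ g) = dag g ≫ dag f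
  dag_dag : ∀ {A B : C} (f : A ⟶ B), dag (dag f) = f

postfix:max "†" => DaggerCategory.dag

section Defs

variable {C : Type u} [Category.{v} C] [DaggerCategory C]

/-- A morphism `f` is a partial isometry if `f ∘ f† ∘ f = f`. -/
def IsPartialIsometry {A B : C} (f : A ⟶ B) : Prop :=
  f ≫ f† ≫ f = f

/-- A morphism `f : A ⟶ B` is unitary if `f† ∘ f = 𝟙 A` and `f ∘ f† = 𝟙 B`. -/
def IsUnitary {A B : C} (f : A ⟶ B) : Prop :=
  f ≫ f† = 𝟙 A ∧ f† ≫ f = 𝟙 B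

/-- A morphism `f` is dagger monic (an isometry) if `f† ∘ f = 𝟙`. -/
def DaggerMonic {A B : C} (f : A ⟶ B) : Prop :=
  f ≫ f† = 𝟙 A

/-- `(L, l)` is a limit cone over the diagram `D`. -/
def IsLimitCone {J : Type u₁} [Category.{v₁} J] (D : J ⥤ C) (L : C)
    (l : ∀ j : J, L ⟶ D.obj j) : Prop :=
  (∀ {j j' : J} (f : j ⟶ j'), l j ≫ D.map f = l j') ∧
  (∀ (M : C) (m : ∀ j : J, M ⟶ D.obj j),
    (∀ {j j' : J} (f : j ⟶ j'), m j ≫ D.map f = m j') →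
    ∃! g : M ⟶ L, ∀ j : J, g ≫ l j = m j)

/-- A class of objects `Ω` is weakly initial when every object admits a morphism
from some member of `Ω`. -/
def WeaklyInitial {J : Type u₁} [Category.{v₁} J] (Ω : Set J) : Prop :=
  ∀ B : J, ∃ A ∈ Ω, Nonempty (A ⟶ B)

/-- `(L, l)` is a dagger limit of `(D, Ω)`: a limit cone whose legs at `Ω` are
partial isometries with pairwise commuting induced projections. -/
def IsDaggerLimit {J : Type u₁} [Category.{v₁} J] (D : J ⥤ C) (Ω : Set J) (L : C)
    (l : ∀ j : J, L ⟶ D.obj j) : Prop :=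
  IsLimitCone D L l ∧
  (∀ j ∈ Ω, IsPartialIsometry (l j)) ∧
  (∀ j ∈ Ω, ∀ j' ∈ Ω,
    (l j ≫ (l j)†) ≫ (l j' ≫ (l j')†) = (l j' ≫ (l j')†) ≫ (l j ≫ (l j)†))

end Defs

/-- `C` admits polar decomposition: every morphism `f : A ⟶ B` factors as
`f = p ∘ i = j ∘ p` where `p` is a partial isometry and `i`, `j` are self-adjoint
bimorphisms. -/
def AdmitsPolarDecomposition (C : Type u) [Category.{v} C] [DaggerCategory C] : Prop :=
  ∀ {A B : C} (f : A ⟶ B), ∃ (p : A ⟶ B) (i : A ⟶ A) (j : B ⟶ B),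
    IsPartialIsometry p ∧ i† = i ∧ j† = j ∧
    Mono i ∧ Epi i ∧ Mono j ∧ Epi j ∧
    f = i ≫ p ∧ f = p ≫ j

/-!
Polar-decompose every leg, `l_A = j_A ∘ p_A = p_A ∘ i_A`. As `C` is balanced, the self-adjoint
bimorphisms `j_A` are isomorphisms, so conjugating `D` by them yields an isomorphic diagram whose
limit legs are the partial isometries `p_A`. Moreover `l_A† l_A = p_A† p_A i_A²` with `i_A` epic and
`p_A† p_A` a projection, and this lets the commutation of the `l_A† l_A` pass to the projections.
-/

open DaggerCategory

section Dagger

variable {C : Type u} [Category.{v} C] [DaggerCategory C]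

def IsProjection {A : C} (P : A ⟶ A) : Prop :=
  P† = P ∧ P ≫ P = P

lemma dag_comp_self_dag {A B : C} (f : A ⟶ B) : (f ≫ f†)† = f ≫ f† := by
  rw [dag_comp, dag_dag]

lemma IsPartialIsometry.isProjection_comp_dag {A B : C} {f : A ⟶ B}
    (hf : IsPartialIsometry f) : IsProjection (f ≫ f†) := by
  refine ⟨dag_comp_self_dag f, ?_⟩
  simpa only [Category.assoc] using congrArg (· ≫ f†) hf

lemma comp_dag_eq_of_polar {A B : C} {f p : A ⟶ B} {i : A ⟶ A} {j : B ⟶ B}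
    (hfi : f = i ≫ p) (hfj : f = p ≫ j) (hi : i† = i) (hj : j† = j) :
    f ≫ f† = (i ≫ i) ≫ p ≫ p† := by
  have hdag : p† ≫ i = j ≫ p† := by
    simpa only [dag_comp, hi, hj] using congrArg dag (hfi.symm.trans hfj)
  calc f ≫ f† = i ≫ (p ≫ j) ≫ p† := by
        rw [hfi, dag_comp, hi]; simp only [Category.assoc, hdag]
    _ = (i ≫ i) ≫ p ≫ p† := by rw [← hfj, hfi]; simp only [Category.assoc]

/-- Cancelling `u` gives `P S P = P S`, and taking daggers gives `P S P = S P`. -/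
lemma IsProjection.comm_of_comm_epi_comp {A : C} {P S u : A ⟶ A} (hP : IsProjection P)
    (hS : S† = S) [Epi u] (h : (u ≫ P) ≫ S = S ≫ u ≫ P) : P ≫ S = S ≫ P := by
  have hPSP : P ≫ S ≫ P = P ≫ S := by
    refine (cancel_epi u).1 ?_
    calc u ≫ P ≫ S ≫ P = ((u ≫ P) ≫ S) ≫ P := by simp only [Category.assoc]
      _ = S ≫ u ≫ P := by rw [h]; simp only [Category.assoc, hP.2]
      _ = u ≫ P ≫ S := by rw [← h, Category.assoc]
  have hPSP' : P ≫ S ≫ P = S ≫ P := by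
    simpa only [dag_comp, hP.1, hS, Category.assoc] using congrArg dag hPSP
  exact hPSP.symm.trans hPSP'

lemma comm_comp_dag_of_polar {L A B : C} {f p : L ⟶ A} {g q : L ⟶ B} {i i' : L ⟶ L}
    {j : A ⟶ A} {j' : B ⟶ B} (hp : IsPartialIsometry p) (hq : IsPartialIsometry q)
    (hfi : f = i ≫ p) (hfj : f = p ≫ j) (hi : i† = i) (hj : j† = j) [Epi i]
    (hgi : g = i' ≫ q) (hgj : g = q ≫ j') (hi' : i'† = i') (hj' : j'† = j') [Epi i']
    (h : (f ≫ f†) ≫ g ≫ g† = (g ≫ g†) ≫ f ≫ f†) :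
    (p ≫ p†) ≫ q ≫ q† = (q ≫ q†) ≫ p ≫ p† := by
  rw [comp_dag_eq_of_polar hfi hfj hi hj] at h
  have hPS := hp.isProjection_comp_dag.comm_of_comm_epi_comp (dag_comp_self_dag g) h
  rw [comp_dag_eq_of_polar hgi hgj hi' hj'] at hPS
  exact (hq.isProjection_comp_dag.comm_of_comm_epi_comp hp.isProjection_comp_dag.1
    hPS.symm).symm

end Dagger

lemma IsLimitCone.of_iso {C : Type u} [Category.{v} C] {J : Type u₁} [Category.{v₁} J]
    {D E : J ⥤ C} (α : D ≅ E) {L : C}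
    {l : ∀ a : J, L ⟶ D.obj a} (hL : IsLimitCone D L l) :
    IsLimitCone E L (fun a => l a ≫ α.hom.app a) := by
  obtain ⟨hcone, huniv⟩ := hL
  refine ⟨fun f => ?_, fun M m hm => ?_⟩
  · rw [Category.assoc, ← α.hom.naturality, ← Category.assoc, hcone]
  obtain ⟨g, hg, hg_unique⟩ := huniv M (fun a => m a ≫ α.inv.app a) fun f => by
    rw [Category.assoc, ← α.inv.naturality, ← Category.assoc, hm]
  refine ⟨g, fun a => ?_, fun g' hg' => hg_unique g' fun a => ?_⟩
  · rw [← Category.assoc, hg, Category.assoc, Iso.inv_hom_id_app, Category.comp_id]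
  · rw [← hg' a]; simp

theorem daggerLimit_of_polar_balanced_general {C : Type u} [Category.{v} C] [DaggerCategory C]
    [Balanced C] (hpolar : AdmitsPolarDecomposition C)
    {J : Type u₁} [Category.{v₁} J] (Ω : Set J) (D : J ⥤ C)
    {L : C} (l : ∀ j : J, L ⟶ D.obj j) (hL : IsLimitCone D L l)
    (hcomm : ∀ j ∈ Ω, ∀ j' ∈ Ω,
      (l j ≫ (l j)†) ≫ (l j' ≫ (l j')†) = (l j' ≫ (l j')†) ≫ (l j ≫ (l j)†)) :
    ∃ E : J ⥤ C, Nonempty (D ≅ E) ∧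
      ∃ (L' : C) (l' : ∀ j : J, L' ⟶ E.obj j), IsDaggerLimit E Ω L' l' := by
  choose p i j hp hi hj _ hi_epi hj_mono hj_epi hfi hfj using fun a : J => hpolar (l a)
  have hj_iso : ∀ a, IsIso (j a) := fun a => isIso_of_mono_of_epi (j a)
  let α := D.isoCopyObj D.obj fun a => (asIso (j a)).symm
  have hleg : ∀ a, l a ≫ α.hom.app a = p a := fun a => by
    change l a ≫ inv (j a) = p a
    rw [hfj a, Category.assoc, IsIso.hom_inv_id, Category.comp_id]
  refine ⟨_, ⟨α⟩, L, _, hL.of_iso α, fun a _ => hleg a ▸ hp a, fun a ha b hb => ?_⟩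
  simp only [hleg]
  exact comm_comp_dag_of_polar (hp a) (hp b) (hfi a) (hfj a) (hi a) (hj a)
    (hfi b) (hfj b) (hi b) (hj b) (hcomm a ha b hb)

/-- Let `C` be a balanced dagger category admitting polar decomposition and
`D : J ⥤ C` a diagram with a limit cone `(L, l)` such that `l_A† ∘ l_A` commutes with
`l_B† ∘ l_B` for all `A, B` in some weakly initial class `Ω`. Then there is a diagram `E`
naturally isomorphic to `D` such that `(E, Ω)` has a dagger limit. -/
theorem daggerLimit_of_polar_balanced {C : Type u} [Category.{v} C] [DaggerCategory C]
    [Balanced C] (hpolar : AdmitsPolarDecomposition C)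
    {J : Type u₁} [Category.{v₁} J] (Ω : Set J) (hΩ : WeaklyInitial Ω) (D : J ⥤ C)
    {L : C} (l : ∀ j : J, L ⟶ D.obj j) (hL : IsLimitCone D L l)
    (hcomm : ∀ j ∈ Ω, ∀ j' ∈ Ω,
      (l j ≫ (l j)†) ≫ (l j' ≫ (l j')†) = (l j' ≫ (l j')†) ≫ (l j ≫ (l j)†)) :
    ∃ E : J ⥤ C, Nonempty (D ≅ E) ∧
      ∃ (L' : C) (l' : ∀ j : J, L' ⟶ E.obj j), IsDaggerLimit E Ω L' l' :=
  daggerLimit_of_polar_balanced_general hpolar Ω D l hL hcomm
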